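/- If every optimal policy of the adversary-MDP M̂ never takes an action outside B(s), then for every deterministic adversary ν with ν(s) ∈ B(s) for all s, the value functions satisfy V̂_{ν}(s) = −Ṽ_{π∘ν}(s) for all s. -/

import Mathlib

open Finset

/-- Value function of policy `π` under adversary `ν`: total expected discounted reward,
written via powers of the transition matrix of the merged policy `a ↦ π(a|ν(s))`. -/
noncomputable def advValue {S A : Type*} [Fintype S] [Fintype A] [DecidableEq S]
    (p : S → A → S → ℝ) (R : S → A → S → ℝ) (γ : ℝ)
    (π : S → A → ℝ) (ν : S → S) (s : S) : ℝ :=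
  ∑' t : ℕ, γ ^ t *
    (((Matrix.of fun s₁ s₂ => ∑ a, π (ν s₁) a * p s₁ a s₂) ^ t).mulVec
      (fun s₁ => ∑ a, π (ν s₁) a * ∑ s', p s₁ a s' * R s₁ a s')) s

/-- Value of deterministic policy `ν` in an MDP with transition `ph` and reward `Rh`. -/
noncomputable def detValue {S Ah : Type*} [Fintype S] [DecidableEq S]
    (ph : S → Ah → S → ℝ) (Rh : S → Ah → S → ℝ) (γ : ℝ) (ν : S → Ah) (s : S) : ℝ :=
  ∑' t : ℕ, γ ^ t *
    (((Matrix.of fun s₁ s₂ => ph s₁ (ν s₁) s₂) ^ t).mulVec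
      (fun s₁ => ∑ s', ph s₁ (ν s₁) s' * Rh s₁ (ν s₁) s')) s

/-! Under `ν`, the adversary-MDP has the transition matrix of `π ∘ ν` in the original MDP, and
its expected one-step reward `∑ₛ' p̂ R̂` is minus the original one, because the denominator of `R̂`
cancels against `p̂`. The discounted value is linear in the reward vector, so it changes sign. -/

-- Where the nonnegative weights sum to `0` they all vanish, so the junk value `x / 0 = 0` is harmless.
theorem sum_mul_div_sum_of_nonneg {ι : Type*} (s : Finset ι) {w f : ι → ℝ}
    (hw : ∀ i ∈ s, 0 ≤ w i) :
    (∑ i ∈ s, w i) * ((∑ i ∈ s, w i * f i) / ∑ i ∈ s, w i) = ∑ i ∈ s, w i * f i := by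
  by_cases h : ∑ i ∈ s, w i = 0
  · have hzero : ∀ i ∈ s, w i = 0 := (sum_eq_zero_iff_of_nonneg hw).mp h
    rw [h, zero_mul, sum_eq_zero fun i hi => by rw [hzero i hi, zero_mul]]
  · exact mul_div_cancel₀ _ h

theorem sum_sum_mul_neg_div_sum {ι κ : Type*} [Fintype ι] [Fintype κ] {w f : ι → κ → ℝ}
    (hw : ∀ i k, 0 ≤ w i k) :
    ∑ k, (∑ i, w i k) * (-(∑ i, w i k * f i k) / ∑ i, w i k) = -∑ i, ∑ k, w i k * f i k := by
  rw [sum_comm (f := fun i k => w i k * f i k), ← sum_neg_distrib]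
  refine sum_congr rfl fun k _ => ?_
  rw [neg_div, mul_neg, sum_mul_div_sum_of_nonneg _ fun i _ => hw i k]

noncomputable def discountedValue {S : Type*} [Fintype S] [DecidableEq S]
    (P : Matrix S S ℝ) (r : S → ℝ) (γ : ℝ) (s : S) : ℝ :=
  ∑' t : ℕ, γ ^ t * (P ^ t).mulVec r s

theorem discountedValue_neg {S : Type*} [Fintype S] [DecidableEq S]
    (P : Matrix S S ℝ) (r : S → ℝ) (γ : ℝ) (s : S) :
    discountedValue P (-r) γ s = -discountedValue P r γ s := by
  simp only [discountedValue, Matrix.mulVec_neg, Pi.neg_apply, mul_neg, tsum_neg]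

theorem adversary_mdp_value_neg_general
    {S A : Type*} [Fintype S] [Fintype A] [DecidableEq S]
    (p : S → A → S → ℝ) (R : S → A → S → ℝ) (γ : ℝ)
    (B : S → Finset S)
    (π : S → A → ℝ) (hπ0 : ∀ s a, 0 ≤ π s a)
    (hp0 : ∀ s a s', 0 ≤ p s a s')
    (ph : S → S → S → ℝ) (Rh : S → S → S → ℝ)
    (hph : ∀ s ah s', ph s ah s' = ∑ a, π ah a * p s a s')
    (hRh : ∀ s ah s', ah ∈ B s →
      Rh s ah s' = -(∑ a, π ah a * p s a s' * R s a s') / (∑ a, π ah a * p s a s')) :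
    ∀ ν : S → S, (∀ s, ν s ∈ B s) →
      ∀ s, detValue ph Rh γ ν s = - advValue p R γ π ν s := by
  intro ν hν s
  have hP : (Matrix.of fun s₁ s₂ => ph s₁ (ν s₁) s₂)
      = Matrix.of fun s₁ s₂ => ∑ a, π (ν s₁) a * p s₁ a s₂ := by
    ext s₁ s₂
    simp only [Matrix.of_apply, hph]
  have hr : (fun s₁ => ∑ s', ph s₁ (ν s₁) s' * Rh s₁ (ν s₁) s')
      = -fun s₁ => ∑ a, π (ν s₁) a * ∑ s', p s₁ a s' * R s₁ a s' := by
    funext s₁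
    simp only [hph, hRh s₁ (ν s₁) _ (hν s₁), Pi.neg_apply, mul_sum, ← mul_assoc]
    exact sum_sum_mul_neg_div_sum fun a s' => mul_nonneg (hπ0 _ a) (hp0 s₁ a s')
  change discountedValue _ _ γ s = -discountedValue _ _ γ s
  rw [hP, hr, discountedValue_neg]

/-- If every optimal deterministic policy of the adversary-MDP M̂ always takes actions
inside B(s), then for every deterministic adversary ν with ν(s) ∈ B(s) for all s, the
value of ν in M̂ is the negation of the adversarial value of π under ν. -/
theorem adversary_mdp_value_neg
    {S A : Type*} [Fintype S] [Fintype A] [DecidableEq S]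
    (p : S → A → S → ℝ) (R : S → A → S → ℝ) (γ : ℝ)
    (hγ0 : 0 < γ) (hγ1 : γ < 1)
    (B : S → Finset S) (hB : ∀ s, (B s).Nonempty)
    (π : S → A → ℝ) (hπ0 : ∀ s a, 0 ≤ π s a) (hπ1 : ∀ s, ∑ a, π s a = 1)
    (hp0 : ∀ s a s', 0 ≤ p s a s') (hp1 : ∀ s a, ∑ s', p s a s' = 1)
    (ph : S → S → S → ℝ) (Rh : S → S → S → ℝ)
    (hph : ∀ s ah s', ph s ah s' = ∑ a, π ah a * p s a s')
    (hRh : ∀ s ah s', ah ∈ B s →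
      Rh s ah s' = -(∑ a, π ah a * p s a s' * R s a s') / (∑ a, π ah a * p s a s'))
    (hopt : ∀ νstar : S → S,
      (∀ (ν : S → S) (s : S), detValue ph Rh γ ν s ≤ detValue ph Rh γ νstar s) →
      ∀ s, νstar s ∈ B s) :
    ∀ ν : S → S, (∀ s, ν s ∈ B s) →
      ∀ s, detValue ph Rh γ ν s = - advValue p R γ π ν s :=
  adversary_mdp_value_neg_general p R γ B π hπ0 hp0 ph Rh hph hRh
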